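/- Let κ ≥ 1 and p > 0. Let Ω be a probability space and let V assign to each ω a function V(ω) : ℝ → ℝ that is almost surely nondecreasing and concave on [0,1], with V(ω)(0) = 0, differentiable at 0 with derivative V'(ω)(0) ≤ κ·V(ω)(1). Let Y* : Ω → [0,1] be measurable with Y*(ω) maximizing z ↦ V(ω)(z) − p·z over [0,1] almost surely. Then E[Y*] ≥ Pr[ V'(ω)(0) ≥ 2κ·p ] / (2κ − 1). -/

import Mathlib

/-!
On the event `2κp ≤ V'(0)` the maximizer `y = Y*` is at least `1 / (2κ - 1)`: comparing the
utility at `y` with the utility at `1`, and bounding `V y` by the tangent line `V'(0) y` at `0`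
and `V 1` from below by the curvature bound `V'(0) / κ`, gives
`V'(0) / κ - p ≤ (V'(0) - p) y`, which forces `y ≥ 1 / (2κ - 1)` once `V'(0) ≥ 2κp`.
Integrating the resulting pointwise bound `Y* ≥ 𝟙[2κp ≤ V'(0)] / (2κ - 1)` gives the theorem.
-/

open MeasureTheory ProbabilityTheory Set

theorem ConcaveOn.le_add_mul_sub_of_hasDerivWithinAt {S : Set ℝ} {f : ℝ → ℝ} {x y f' : ℝ}
    (hfc : ConcaveOn ℝ S f) (hx : x ∈ S) (hy : y ∈ S) (hxy : x ≤ y)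
    (hf' : HasDerivWithinAt f f' S x) : f y ≤ f x + f' * (y - x) := by
  rcases hxy.eq_or_lt with rfl | hlt
  · simp
  have hslope := hfc.slope_le_of_hasDerivWithinAt hx hy hlt hf'
  rw [slope_def_field, div_le_iff₀ (sub_pos.mpr hlt)] at hslope
  linarith

theorem inv_two_mul_sub_one_le_of_isMaxOn {κ p D y : ℝ} {V : ℝ → ℝ} (hκ : 1 ≤ κ) (hp : 0 < p)
    (hconc : ConcaveOn ℝ (Icc 0 1) V) (hV0 : V 0 = 0)
    (hderiv : HasDerivWithinAt V D (Icc 0 1) 0) (hcurv : D ≤ κ * V 1)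
    (hy : y ∈ Icc (0 : ℝ) 1) (hmax : IsMaxOn (fun z ↦ V z - p * z) (Icc 0 1) y)
    (hD : 2 * κ * p ≤ D) : (2 * κ - 1)⁻¹ ≤ y := by
  have hmax_one : V 1 - p * 1 ≤ V y - p * y :=
    isMaxOn_iff.mp hmax 1 (right_mem_Icc.mpr zero_le_one)
  have htangent : V y ≤ D * y := by
    simpa [hV0] using
      hconc.le_add_mul_sub_of_hasDerivWithinAt (left_mem_Icc.mpr zero_le_one) hy hy.1 hderiv
  have hkey : D - κ * p ≤ κ * (D - p) * y := by nlinarith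
  rw [inv_le_iff_one_le_mul₀ (by linarith)]
  by_contra! hlt
  have hpos : 0 < κ * (D - p) := mul_pos (by linarith) (by nlinarith)
  -- `(2κ - 1)(D - κp) - κ(D - p) = (κ - 1)(D - 2κp) ≥ 0`
  nlinarith [mul_lt_mul_of_pos_left hlt hpos, mul_nonneg (sub_nonneg.mpr hκ) (sub_nonneg.mpr hD)]

theorem measureReal_mul_le_integral {α : Type*} [MeasurableSpace α] {μ : Measure α}
    [IsFiniteMeasure μ] {s : Set α} {c : ℝ} {f : α → ℝ} (hs : MeasurableSet s)
    (hf : Integrable f μ) (hf0 : ∀ᵐ x ∂μ, 0 ≤ f x) (hfc : ∀ᵐ x ∂μ, x ∈ s → c ≤ f x) :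
    μ.real s * c ≤ ∫ x, f x ∂μ := by
  have hle : ∀ᵐ x ∂μ, s.indicator (fun _ ↦ c) x ≤ f x := by
    filter_upwards [hf0, hfc] with x hx0 hxc
    by_cases hxs : x ∈ s
    · simpa [hxs] using hxc hxs
    · simpa [hxs] using hx0
  simpa [integral_indicator_const c hs] using
    integral_mono_ae ((integrable_const c).indicator hs) hf hle

/-- For a random valuation V with curvature at most κ and a.s. utility maximizer
Y* at price p, E[Y*] ≥ Pr[V'(0) ≥ 2κp]/(2κ − 1). -/
theorem stmt_11 {Ω : Type*} [MeasureSpace Ω] [IsProbabilityMeasure (ℙ : Measure Ω)]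
    (κ p : ℝ) (hκ : 1 ≤ κ) (hp : 0 < p)
    (V : Ω → ℝ → ℝ) (D Ystar : Ω → ℝ)
    (hDmeas : Measurable D) (hYmeas : Measurable Ystar)
    (hprop : ∀ᵐ ω, MonotoneOn (V ω) (Set.Icc (0:ℝ) 1) ∧
      ConcaveOn ℝ (Set.Icc (0:ℝ) 1) (V ω) ∧ V ω 0 = 0 ∧
      HasDerivWithinAt (V ω) (D ω) (Set.Icc (0:ℝ) 1) 0 ∧ D ω ≤ κ * V ω 1 ∧
      Ystar ω ∈ Set.Icc (0:ℝ) 1 ∧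
      ∀ z ∈ Set.Icc (0:ℝ) 1, V ω z - p * z ≤ V ω (Ystar ω) - p * Ystar ω) :
    ∫ ω, Ystar ω ≥ (ℙ {ω | 2 * κ * p ≤ D ω}).toReal / (2 * κ - 1) := by
  have hY01 : ∀ᵐ ω, Ystar ω ∈ Icc (0 : ℝ) 1 := hprop.mono fun _ h ↦ h.2.2.2.2.2.1
  have hYint : Integrable Ystar := by
    refine .of_bound hYmeas.aestronglyMeasurable 1 (hY01.mono fun ω hω ↦ ?_)
    rw [Real.norm_eq_abs, abs_le]
    exact ⟨by linarith [hω.1], hω.2⟩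
  have hbound : ∀ᵐ ω, ω ∈ {ω | 2 * κ * p ≤ D ω} → (2 * κ - 1)⁻¹ ≤ Ystar ω := by
    filter_upwards [hprop] with ω ⟨_, hconc, hV0, hderiv, hcurv, hy, hopt⟩ hD
    exact inv_two_mul_sub_one_le_of_isMaxOn hκ hp hconc hV0 hderiv hcurv hy
      (isMaxOn_iff.mpr hopt) hD
  rw [ge_iff_le, div_eq_mul_inv]
  exact measureReal_mul_le_integral (measurableSet_le measurable_const hDmeas) hYint
    (hY01.mono fun _ h ↦ h.1) hbound
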